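/- Let T ≥ 3, λ > 0, G > 0, c ≥ 0, let each f_t : ℝ^d → ℝ be λ-strongly convex and differentiable with ‖∇f_t(w)‖ ≤ G for all w ∈ 𝒟, let w_1 ∈ 𝒟, and define iterates by w_{t+1} = Π(w_t − η_t·∇f_t(w_t)) with step sizes η_t = 1/(λ(t + c)). Then the regret satisfies R = Σ_{t=1}^T f_t(w_t) − min_{w ∈ 𝒟} Σ_{t=1}^T f_t(w) ≤ λ·(c + 1)·D² + (2G²/λ)·log(T/(1 + c) + 1). -/

import Mathlib

/-!
With `η_t = 1 / (λ (t + c))`, nonexpansiveness of the projection gives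
`2 η_t ⟪w_t - u, g_t⟫ ≤ ‖w_t - u‖² - ‖w_{t+1} - u‖² + η_t² ‖g_t‖²`, and strong convexity bounds
`f_t(w_t) - f_t(u)` by `⟪w_t - u, g_t⟫ - λ/2 ‖w_t - u‖²`. The resulting coefficients
`1/(2η_t) - λ/2 = λ(t + c - 1)/2` of `‖w_t - u‖²` and `1/(2η_t)` of `‖w_{t+1} - u‖²` telescope,
leaving `λc/2 · D²` plus `G²/(2λ) · ∑ 1/(t + c)`, and `1/x ≤ 2 log((x + 1)/x)` for `x ≥ 1` bounds
the harmonic-type sum by `2 log (T/(1 + c) + 1)`.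
-/

open scoped InnerProductSpace BigOperators

/-- Euclidean projection onto the ball `{w : ‖w‖ ≤ D/2}` in `ℝ^d`. -/
noncomputable def ballProj (d : ℕ) (D : ℝ) (p : EuclideanSpace ℝ (Fin d)) :
    EuclideanSpace ℝ (Fin d) :=
  if ‖p‖ ≤ D / 2 then p else (D / (2 * ‖p‖)) • p

open Finset Metric

lemma sum_Icc_one_sub_add_one {M : Type*} [AddCommGroup M] (φ : ℕ → M) (T : ℕ) :
    ∑ t ∈ Icc 1 T, (φ t - φ (t + 1)) = φ 1 - φ (T + 1) := by
  induction T with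
  | zero => simp
  | succ T ih => rw [sum_Icc_succ_top (by omega), ih]; abel

lemma one_div_le_two_mul_log_add_one_sub_log {x : ℝ} (hx : 1 ≤ x) :
    1 / x ≤ 2 * (Real.log (x + 1) - Real.log x) := by
  have hx0 : 0 < x := by linarith
  have hlog : 1 - ((x + 1) / x)⁻¹ ≤ Real.log ((x + 1) / x) :=
    Real.one_sub_inv_le_log_of_pos (by positivity)
  rw [Real.log_div (by positivity) hx0.ne', inv_div] at hlog
  have h : 1 / x ≤ 2 * (1 - x / (x + 1)) := by
    rw [div_le_iff₀ hx0]; field_simp; linarith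
  linarith

lemma sum_Icc_one_div_add_le_log (T : ℕ) {c : ℝ} (hc : 0 ≤ c) :
    ∑ t ∈ Icc 1 T, 1 / ((t : ℝ) + c) ≤ 2 * Real.log (T / (1 + c) + 1) := by
  have hterm : ∀ t ∈ Icc 1 T, 1 / ((t : ℝ) + c) ≤
      2 * (Real.log (((t + 1 : ℕ) : ℝ) + c) - Real.log ((t : ℝ) + c)) := by
    intro t ht
    have ht1 : (1 : ℝ) ≤ t := by exact_mod_cast (mem_Icc.mp ht).1
    rw [Nat.cast_succ, add_right_comm]
    exact one_div_le_two_mul_log_add_one_sub_log (by linarith)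
  have htel := sum_Icc_one_sub_add_one (fun t : ℕ => -Real.log ((t : ℝ) + c)) T
  have hdiv : (T : ℝ) / (1 + c) + 1 = ((T : ℝ) + 1 + c) / (1 + c) := by
    field_simp; ring
  calc ∑ t ∈ Icc 1 T, 1 / ((t : ℝ) + c)
      ≤ ∑ t ∈ Icc 1 T, 2 * (Real.log (((t + 1 : ℕ) : ℝ) + c) - Real.log ((t : ℝ) + c)) :=
        sum_le_sum hterm
    _ = 2 * (Real.log (((T + 1 : ℕ) : ℝ) + c) - Real.log (1 + c)) := by
        rw [← mul_sum]; simp only [neg_sub_neg, Nat.cast_one] at htel; rw [htel]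
    _ = 2 * Real.log (T / (1 + c) + 1) := by
        rw [hdiv, Real.log_div (by positivity) (by positivity)]; push_cast; ring_nf

lemma ballProj_mem_closedBall {d : ℕ} {D : ℝ} (hD : 0 ≤ D) (p : EuclideanSpace ℝ (Fin d)) :
    ballProj d D p ∈ closedBall 0 (D / 2) := by
  rw [mem_closedBall_zero_iff, ballProj]
  split_ifs with h
  · exact h
  · have hp : 0 < ‖p‖ := by linarith
    rw [norm_smul, Real.norm_of_nonneg (by positivity)]
    exact le_of_eq (by field_simp)

lemma norm_ballProj_sub_le {d : ℕ} {D : ℝ} (p : EuclideanSpace ℝ (Fin d))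
    {q : EuclideanSpace ℝ (Fin d)} (hq : q ∈ closedBall 0 (D / 2)) : ‖ballProj d D p - q‖ ≤ ‖p - q‖ := by
  rw [mem_closedBall_zero_iff] at hq
  rw [ballProj]
  split_ifs with h
  · exact le_rfl
  · have hD : 0 ≤ D := by linarith [norm_nonneg q]
    have hp : 0 < ‖p‖ := by linarith
    set s := D / (2 * ‖p‖) with hs
    have hs0 : 0 ≤ s := by positivity
    have hs1 : s ≤ 1 := by rw [div_le_one (by positivity)]; linarith
    have hsp : s * ‖p‖ = D / 2 := by rw [hs]; field_simp
    have hpq : ⟪p, q⟫_ℝ ≤ ‖p‖ * ‖q‖ := real_inner_le_norm p q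
    have hsq : ‖s • p - q‖ ^ 2 ≤ ‖p - q‖ ^ 2 := by
      rw [norm_sub_sq_real, norm_sub_sq_real, norm_smul, real_inner_smul_left,
        Real.norm_of_nonneg hs0]
      nlinarith [mul_nonneg (sub_nonneg.2 hs1) (norm_nonneg p)]
    exact pow_le_pow_iff_left₀ (norm_nonneg _) (norm_nonneg _) two_ne_zero |>.mp hsq

lemma mem_closedBall_of_eq_ballProj {d T : ℕ} {D : ℝ} {w p : ℕ → EuclideanSpace ℝ (Fin d)}
    (hw1 : w 1 ∈ closedBall 0 (D / 2))
    (hupd : ∀ t ∈ Icc 1 (T - 1), w (t + 1) = ballProj d D (p t)) :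
    ∀ t ∈ Icc 1 T, w t ∈ closedBall 0 (D / 2) := by
  have hD : 0 ≤ D := by linarith [nonempty_closedBall.mp ⟨_, hw1⟩]
  intro t ht
  obtain ⟨ht1, htT⟩ := mem_Icc.mp ht
  induction t, ht1 using Nat.le_induction with
  | base => exact hw1
  | succ t ht1 _ =>
    rw [hupd t (mem_Icc.mpr ⟨ht1, by omega⟩)]
    exact ballProj_mem_closedBall hD _

lemma exists_extend_of_eq_on_Icc {α : Type*} (w F : ℕ → α) (T : ℕ)
    (hupd : ∀ t ∈ Icc 1 (T - 1), w (t + 1) = F t) :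
    ∃ W : ℕ → α, W 1 = w 1 ∧ (∀ t ∈ Icc 1 T, W t = w t) ∧ ∀ t ∈ Icc 1 T, W (t + 1) = F t := by
  rcases T.eq_zero_or_pos with rfl | hT
  · exact ⟨w, rfl, by simp, by simp⟩
  have hne : ∀ t ∈ Icc 1 T, t ≠ T + 1 := fun t ht => by grind
  refine ⟨Function.update w (T + 1) (F T), Function.update_of_ne (by omega) _ _,
    fun t ht => Function.update_of_ne (hne t ht) _ _, fun t ht => ?_⟩
  obtain ⟨ht1, htT⟩ := mem_Icc.mp ht
  obtain htT | rfl := htT.lt_or_eq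
  · rw [Function.update_of_ne (by omega), hupd t (mem_Icc.mpr ⟨ht1, by omega⟩)]
  · exact Function.update_self _ _ _

section OnlineGradientDescent

variable {E : Type*} [NormedAddCommGroup E] [InnerProductSpace ℝ E]

lemma two_mul_inner_le_of_norm_sub_le {w w' u g : E} {η : ℝ}
    (h : ‖w' - u‖ ≤ ‖w - η • g - u‖) :
    2 * η * ⟪w - u, g⟫_ℝ ≤ ‖w - u‖ ^ 2 - ‖w' - u‖ ^ 2 + η ^ 2 * ‖g‖ ^ 2 := by
  have hexp : ‖w - η • g - u‖ ^ 2 = ‖w - u‖ ^ 2 - 2 * η * ⟪w - u, g⟫_ℝ + η ^ 2 * ‖g‖ ^ 2 := by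
    rw [sub_right_comm, norm_sub_sq_real, real_inner_smul_right, norm_smul, mul_pow,
      Real.norm_eq_abs, sq_abs]
    ring
  nlinarith [pow_le_pow_left₀ (norm_nonneg _) h 2]

lemma sub_le_of_strongConvex_step {f : E → ℝ} {w w' u g : E} {lam s G : ℝ} (hlam : 0 < lam)
    (hs : 0 < s) (hsc : f w + ⟪g, u - w⟫_ℝ + lam / 2 * ‖u - w‖ ^ 2 ≤ f u) (hg : ‖g‖ ≤ G)
    (hstep : ‖w' - u‖ ≤ ‖w - (1 / (lam * s)) • g - u‖) :
    f w - f u ≤ lam * (s - 1) / 2 * ‖w - u‖ ^ 2 - lam * s / 2 * ‖w' - u‖ ^ 2 +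
      G ^ 2 / (2 * lam) * (1 / s) := by
  have hdesc := two_mul_inner_le_of_norm_sub_le hstep
  have hinner : ⟪g, u - w⟫_ℝ = -⟪w - u, g⟫_ℝ := by
    rw [real_inner_comm, ← inner_neg_left, neg_sub]
  rw [hinner, norm_sub_rev] at hsc
  have hg2 : ‖g‖ ^ 2 ≤ G ^ 2 := pow_le_pow_left₀ (norm_nonneg g) hg 2
  have hls : 0 < lam * s := mul_pos hlam hs
  have hscaled : ⟪w - u, g⟫_ℝ ≤ lam * s / 2 * (‖w - u‖ ^ 2 - ‖w' - u‖ ^ 2) +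
      1 / (2 * lam * s) * ‖g‖ ^ 2 := by
    have := mul_le_mul_of_nonneg_left hdesc (by positivity : 0 ≤ lam * s / 2)
    field_simp at this ⊢
    linarith
  have hG : 1 / (2 * lam * s) * ‖g‖ ^ 2 ≤ G ^ 2 / (2 * lam) * (1 / s) := by
    rw [one_div_mul_eq_div, div_mul_div_comm, mul_one]
    gcongr
  nlinarith

theorem sum_sub_le_of_strongConvex_steps (T : ℕ) {lam c G D : ℝ} (hlam : 0 < lam) (hc : 0 ≤ c)
    (f : ℕ → E → ℝ) (g w : ℕ → E) (u : E)
    (hsc : ∀ t ∈ Icc 1 T, f t (w t) + ⟪g t, u - w t⟫_ℝ + lam / 2 * ‖u - w t‖ ^ 2 ≤ f t u)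
    (hg : ∀ t ∈ Icc 1 T, ‖g t‖ ≤ G)
    (hstep : ∀ t ∈ Icc 1 T, ‖w (t + 1) - u‖ ≤ ‖w t - (1 / (lam * ((t : ℝ) + c))) • g t - u‖)
    (hw1 : ‖w 1 - u‖ ≤ D) :
    ∑ t ∈ Icc 1 T, (f t (w t) - f t u) ≤
      lam * c / 2 * D ^ 2 + G ^ 2 / lam * Real.log (T / (1 + c) + 1) := by
  set φ : ℕ → ℝ := fun t => lam * ((t : ℝ) + c - 1) / 2 * ‖w t - u‖ ^ 2 with hφ
  have hround : ∀ t ∈ Icc 1 T,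
      f t (w t) - f t u ≤ (φ t - φ (t + 1)) + G ^ 2 / (2 * lam) * (1 / ((t : ℝ) + c)) := by
    intro t ht
    have ht1 : (1 : ℝ) ≤ t := by exact_mod_cast (mem_Icc.mp ht).1
    have := sub_le_of_strongConvex_step hlam (by linarith) (hsc t ht) (hg t ht) (hstep t ht)
    simp only [hφ, Nat.cast_succ]
    linarith
  have hφ1 : φ 1 ≤ lam * c / 2 * D ^ 2 := by
    simp only [hφ, Nat.cast_one, add_sub_cancel_left]
    gcongr
  have hφT : 0 ≤ φ (T + 1) := by
    have hT : (0 : ℝ) ≤ ((T + 1 : ℕ) : ℝ) + c - 1 := by push_cast; linarith [T.cast_nonneg (α := ℝ)]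
    exact mul_nonneg (div_nonneg (mul_nonneg hlam.le hT) zero_le_two) (sq_nonneg _)
  calc ∑ t ∈ Icc 1 T, (f t (w t) - f t u)
      ≤ ∑ t ∈ Icc 1 T, ((φ t - φ (t + 1)) + G ^ 2 / (2 * lam) * (1 / ((t : ℝ) + c))) :=
        sum_le_sum hround
    _ = φ 1 - φ (T + 1) + G ^ 2 / (2 * lam) * ∑ t ∈ Icc 1 T, 1 / ((t : ℝ) + c) := by
        rw [sum_add_distrib, sum_Icc_one_sub_add_one, mul_sum]
    _ ≤ lam * c / 2 * D ^ 2 + G ^ 2 / (2 * lam) * (2 * Real.log (T / (1 + c) + 1)) := by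
        gcongr ?_ + _ * ?_
        · linarith
        · exact sum_Icc_one_div_add_le_log T hc
    _ = lam * c / 2 * D ^ 2 + G ^ 2 / lam * Real.log (T / (1 + c) + 1) := by
        field_simp

end OnlineGradientDescent

theorem stmt15_general (d T : ℕ) (D G lam c : ℝ) (hlam : 0 < lam) (hc : 0 ≤ c)
    (f : ℕ → EuclideanSpace ℝ (Fin d) → ℝ)
    (hsc : ∀ t ∈ Finset.Icc 1 T,
      ∀ u ∈ Metric.closedBall (0 : EuclideanSpace ℝ (Fin d)) (D / 2),
      ∀ v ∈ Metric.closedBall (0 : EuclideanSpace ℝ (Fin d)) (D / 2),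
        f t v + ⟪gradient (f t) v, u - v⟫_ℝ + lam / 2 * ‖u - v‖ ^ 2 ≤ f t u)
    (hgrad : ∀ t ∈ Finset.Icc 1 T,
      ∀ v ∈ Metric.closedBall (0 : EuclideanSpace ℝ (Fin d)) (D / 2), ‖gradient (f t) v‖ ≤ G)
    (w : ℕ → EuclideanSpace ℝ (Fin d))
    (hw1 : w 1 ∈ Metric.closedBall (0 : EuclideanSpace ℝ (Fin d)) (D / 2))
    (hupd : ∀ t ∈ Finset.Icc 1 (T - 1),
      w (t + 1) = ballProj d D (w t - (1 / (lam * ((t : ℝ) + c))) • gradient (f t) (w t))) :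
    (∑ t ∈ Finset.Icc 1 T, f t (w t)) -
        (⨅ v : Metric.closedBall (0 : EuclideanSpace ℝ (Fin d)) (D / 2),
          ∑ t ∈ Finset.Icc 1 T, f t (v : EuclideanSpace ℝ (Fin d))) ≤
      lam * (c + 1) * D ^ 2 + (2 * G ^ 2 / lam) * Real.log ((T : ℝ) / (1 + c) + 1) := by
  have hwB := mem_closedBall_of_eq_ballProj hw1 hupd
  -- `w` is only pinned down up to round `T`; one extra projected step lets round `T` telescope
  obtain ⟨W, hW1, hWw, hWnext⟩ := exists_extend_of_eq_on_Icc w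
    (fun t => ballProj d D (w t - (1 / (lam * ((t : ℝ) + c))) • gradient (f t) (w t))) T hupd
  have hregret : ∀ u ∈ closedBall (0 : EuclideanSpace ℝ (Fin d)) (D / 2),
      ∑ t ∈ Icc 1 T, f t (w t) - ∑ t ∈ Icc 1 T, f t u ≤
        lam * c / 2 * D ^ 2 + G ^ 2 / lam * Real.log (T / (1 + c) + 1) := by
    intro u hu
    rw [← sum_sub_distrib, ← sum_congr rfl fun t ht => congrArg (f t · - f t u) (hWw t ht)]
    refine sum_sub_le_of_strongConvex_steps T hlam hc f (fun t => gradient (f t) (w t)) W u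
      (fun t ht => ?_) (fun t ht => hgrad t ht _ (hwB t ht)) (fun t ht => ?_) ?_
    · rw [hWw t ht]
      exact hsc t ht u hu (w t) (hwB t ht)
    · rw [hWw t ht, hWnext t ht]
      exact norm_ballProj_sub_le _ hu
    · rw [mem_closedBall_zero_iff] at hw1 hu
      rw [hW1]
      linarith [norm_sub_le (w 1) u]
  have : Nonempty (closedBall (0 : EuclideanSpace ℝ (Fin d)) (D / 2)) := ⟨⟨w 1, hw1⟩⟩
  have hlog : 0 ≤ Real.log ((T : ℝ) / (1 + c) + 1) :=
    Real.log_nonneg (by linarith [show 0 ≤ (T : ℝ) / (1 + c) by positivity])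
  refine (sub_le_comm.mp <| le_ciInf fun v : closedBall (0 : EuclideanSpace ℝ (Fin d)) (D / 2) =>
    sub_le_comm.mp (hregret v v.2)).trans (add_le_add ?_ ?_)
  · gcongr
    nlinarith
  · gcongr
    linarith [sq_nonneg G]

/-- For `λ`-strongly convex differentiable losses with gradients bounded by `G`
on the ball `𝒟`, the iterates `w (t+1) = Π(w t − η_t • ∇f_t(w t))` with `η_t = 1/(λ(t + c))`
achieve regret at most `λ·(c + 1)·D² + (2G²/λ)·log (T/(1 + c) + 1)`. -/
theorem stmt15 (d T : ℕ) (hT : 3 ≤ T) (D G lam c : ℝ) (hD : 0 < D) (hlam : 0 < lam)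
    (hG : 0 < G) (hc : 0 ≤ c)
    (f : ℕ → EuclideanSpace ℝ (Fin d) → ℝ)
    (hdiff : ∀ t ∈ Finset.Icc 1 T, Differentiable ℝ (f t))
    (hsc : ∀ t ∈ Finset.Icc 1 T,
      ∀ u ∈ Metric.closedBall (0 : EuclideanSpace ℝ (Fin d)) (D / 2),
      ∀ v ∈ Metric.closedBall (0 : EuclideanSpace ℝ (Fin d)) (D / 2),
        f t v + ⟪gradient (f t) v, u - v⟫_ℝ + lam / 2 * ‖u - v‖ ^ 2 ≤ f t u)
    (hgrad : ∀ t ∈ Finset.Icc 1 T,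
      ∀ v ∈ Metric.closedBall (0 : EuclideanSpace ℝ (Fin d)) (D / 2), ‖gradient (f t) v‖ ≤ G)
    (w : ℕ → EuclideanSpace ℝ (Fin d))
    (hw1 : w 1 ∈ Metric.closedBall (0 : EuclideanSpace ℝ (Fin d)) (D / 2))
    (hupd : ∀ t ∈ Finset.Icc 1 (T - 1),
      w (t + 1) = ballProj d D (w t - (1 / (lam * ((t : ℝ) + c))) • gradient (f t) (w t))) :
    (∑ t ∈ Finset.Icc 1 T, f t (w t)) -
        (⨅ v : Metric.closedBall (0 : EuclideanSpace ℝ (Fin d)) (D / 2),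
          ∑ t ∈ Finset.Icc 1 T, f t (v : EuclideanSpace ℝ (Fin d))) ≤
      lam * (c + 1) * D ^ 2 + (2 * G ^ 2 / lam) * Real.log ((T : ℝ) / (1 + c) + 1) :=
  stmt15_general d T D G lam c hlam hc f hsc hgrad w hw1 hupd
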